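/- arXiv:1601.04358 — 2 statements merged into one kernel-verified Lean document; each statement's English description precedes it below -/
import Mathlib

section
/- For n > 2 and x ≥ 0, f(x) = L(x)·G'(x) − (n/(n+2))·G(x)² satisfies f(0) = 0 and f'(x) = sinh(x)^{n−3}·((n−2)·cosh(x)·m(x) + G(x)·sinh(x)²·(1 − 2n/(n+2))), where L(x)·G'(x) = sinh(x)^{n−2}·m(x), m(x) = G(x)·cosh(x) − sinh(x)^n/n, and G(x) = ∫₀ˣ sinh(s)^{n−1} ds. -/
/-!
With `m' = G · sinh` (the `sinh ^ (n - 1) · cosh` terms cancel), the product rule gives the formula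
wherever `sinh x ≠ 0`, after factoring out `sinh x ^ (n - 3)`. At `x = 0` the factor
`sinh ^ (n - 2)` need not be differentiable, but it is continuous and multiplies `m`, which
vanishes to second order there, so `f` has derivative `0`, as does the right-hand side.
-/

open Real

theorem HasDerivAt.mul_of_continuousAt_of_eq_zero {𝕜 : Type*} [NontriviallyNormedField 𝕜]
    {u v : 𝕜 → 𝕜} {a : 𝕜} (hu : ContinuousAt u a) (hv : HasDerivAt v 0 a) (hva : v a = 0) :
    HasDerivAt (fun y => u y * v y) 0 a := by
  rw [hasDerivAt_iff_isLittleO] at hv ⊢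
  simpa [hva] using hu.tendsto.isBigO_one 𝕜 |>.mul_isLittleO hv

theorem Real.continuous_sinh_rpow {p : ℝ} (hp : 0 ≤ p) : Continuous fun y => sinh y ^ p :=
  continuous_sinh.rpow_const fun _ => Or.inr hp

namespace SinhPow

variable {n : ℝ}

noncomputable def G (n y : ℝ) : ℝ := ∫ s in (0 : ℝ)..y, sinh s ^ (n - 1)

noncomputable def m (n y : ℝ) : ℝ := G n y * cosh y - sinh y ^ n / n

noncomputable def f (n y : ℝ) : ℝ := sinh y ^ (n - 2) * m n y - n / (n + 2) * G n y ^ 2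

@[simp] theorem G_zero : G n 0 = 0 := intervalIntegral.integral_same

theorem m_zero (hn : n ≠ 0) : m n 0 = 0 := by simp [m, zero_rpow hn]

theorem f_zero (hn : n ≠ 0) : f n 0 = 0 := by simp [f, m_zero hn]

theorem hasDerivAt_G (hn : 1 ≤ n) (y : ℝ) : HasDerivAt (G n) (sinh y ^ (n - 1)) y :=
  have hc := continuous_sinh_rpow (sub_nonneg.2 hn)
  intervalIntegral.integral_hasDerivAt_right (hc.intervalIntegrable 0 y)
    (hc.stronglyMeasurableAtFilter _ _) hc.continuousAt

theorem hasDerivAt_m (hn : 1 ≤ n) (y : ℝ) : HasDerivAt (m n) (G n y * sinh y) y := by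
  have hsinh := ((hasDerivAt_sinh y).rpow_const (p := n) (Or.inr hn)).div_const n
  refine (((hasDerivAt_G hn y).mul (hasDerivAt_cosh y)).sub hsinh).congr_deriv ?_
  field_simp [(by linarith : n ≠ 0)]
  ring

theorem hasDerivAt_f (hn : 2 ≤ n) (x : ℝ) :
    HasDerivAt (f n)
      (sinh x ^ (n - 3) * ((n - 2) * cosh x * m n x + G n x * sinh x ^ 2 * (1 - 2 * n / (n + 2))))
      x := by
  have hn1 : 1 ≤ n := by linarith
  have hG2 := ((hasDerivAt_G hn1 x).pow 2).const_mul (n / (n + 2))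
  rcases eq_or_ne x 0 with rfl | hx
  · have hm : HasDerivAt (m n) 0 0 := (hasDerivAt_m hn1 0).congr_deriv (by simp)
    have hprod := hm.mul_of_continuousAt_of_eq_zero
      (continuous_sinh_rpow (by linarith : 0 ≤ n - 2)).continuousAt (m_zero (by linarith))
    refine (hprod.sub hG2).congr_deriv ?_
    simp [m_zero (by linarith : n ≠ 0)]
  · have hs : sinh x ≠ 0 := sinh_ne_zero.2 hx
    have hpow := (hasDerivAt_sinh x).rpow_const (p := n - 2) (Or.inl hs)
    have h2 : sinh x ^ (n - 2) = sinh x ^ (n - 3) * sinh x := by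
      rw [← rpow_add_one hs]; ring_nf
    have h1 : sinh x ^ (n - 1) = sinh x ^ (n - 3) * sinh x ^ 2 := by
      rw [← rpow_add_natCast hs]; norm_num; ring_nf
    refine ((hpow.mul (hasDerivAt_m hn1 x)).sub hG2).congr_deriv ?_
    rw [show n - 2 - 1 = n - 3 by ring, h2, h1]
    ring

end SinhPow

theorem f_props_general (n : ℝ) (hn : 2 < n) (x : ℝ) :
    (Real.sinh (0:ℝ) ^ (n - 2) *
        ((∫ s in (0:ℝ)..(0:ℝ), Real.sinh s ^ (n - 1)) * Real.cosh 0 - Real.sinh (0:ℝ) ^ n / n)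
      - n / (n + 2) * (∫ s in (0:ℝ)..(0:ℝ), Real.sinh s ^ (n - 1)) ^ 2 = 0)
    ∧ HasDerivAt (fun y : ℝ =>
        Real.sinh y ^ (n - 2) *
          ((∫ s in (0:ℝ)..y, Real.sinh s ^ (n - 1)) * Real.cosh y - Real.sinh y ^ n / n)
        - n / (n + 2) * (∫ s in (0:ℝ)..y, Real.sinh s ^ (n - 1)) ^ 2)
      (Real.sinh x ^ (n - 3) *
        ((n - 2) * Real.cosh x *
            ((∫ s in (0:ℝ)..x, Real.sinh s ^ (n - 1)) * Real.cosh x - Real.sinh x ^ n / n)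
          + (∫ s in (0:ℝ)..x, Real.sinh s ^ (n - 1)) * Real.sinh x ^ 2 * (1 - 2 * n / (n + 2)))) x :=
  ⟨SinhPow.f_zero (by linarith), SinhPow.hasDerivAt_f hn.le x⟩

theorem f_props (n : ℝ) (hn : 2 < n) (x : ℝ) (hx : 0 ≤ x) :
    (Real.sinh (0:ℝ) ^ (n - 2) *
        ((∫ s in (0:ℝ)..(0:ℝ), Real.sinh s ^ (n - 1)) * Real.cosh 0 - Real.sinh (0:ℝ) ^ n / n)
      - n / (n + 2) * (∫ s in (0:ℝ)..(0:ℝ), Real.sinh s ^ (n - 1)) ^ 2 = 0)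
    ∧ HasDerivAt (fun y : ℝ =>
        Real.sinh y ^ (n - 2) *
          ((∫ s in (0:ℝ)..y, Real.sinh s ^ (n - 1)) * Real.cosh y - Real.sinh y ^ n / n)
        - n / (n + 2) * (∫ s in (0:ℝ)..y, Real.sinh s ^ (n - 1)) ^ 2)
      (Real.sinh x ^ (n - 3) *
        ((n - 2) * Real.cosh x *
            ((∫ s in (0:ℝ)..x, Real.sinh s ^ (n - 1)) * Real.cosh x - Real.sinh x ^ n / n)
          + (∫ s in (0:ℝ)..x, Real.sinh s ^ (n - 1)) * Real.sinh x ^ 2 * (1 - 2 * n / (n + 2)))) x :=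
  f_props_general n hn x
end

section
/- For n > 2, as x → 0⁺ one has g(x) = x^{n+2}·(1/(np) − σ/n) + O(x^{n+4}), where g(x) = (n−2)·cosh(x)·m(x) − σ·G(x)·sinh(x)², m(x) = G(x)·cosh(x) − sinh(x)^n/n, G(x) = ∫₀ˣ sinh(s)^{n−1} ds, and p = (n+2)/(n−2); in particular if σ < 1/p then g is positive on some interval (0,δ). -/
/-!
Near `0⁺` the four quantities `cosh x`, `sinh x ^ 2`, `G x / x ^ n` and `(sinh x / x) ^ n` are
explicit quadratics in `x` up to `O(x⁴)`. For `sinh` and `cosh` this follows by raising the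
order of a remainder along `sinh' = cosh`, `cosh' = sinh` (mean value theorem);
for the powers from `(1 + u) ^ a = 1 + a u + O(u²)` with `u = sinh x / x - 1 = x² / 6 + O(x⁴)`;
for `G` by integrating the expansion of `sinh ^ (n - 1)`. Since `g` is homogeneous of degree one in
`(G, sinh ^ n)`, `g x = x ^ n * ĝ x` with `ĝ` the same expression in the normalized quantities, and
the coefficient `1 / (n p) - σ / n` of `x²` in `ĝ` comes out of a polynomial identity.
-/

open Real Filter Topology Asymptotics Set

section
variable {α : Type*} {l : Filter α}

theorem Asymptotics.IsBigO.mul_sub_mul {f f' h h' g : α → ℝ}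
    (hf : (fun x => f x - f' x) =O[l] g) (hh : (fun x => h x - h' x) =O[l] g)
    (hh_bdd : h =O[l] fun _ => (1 : ℝ)) (hf'_bdd : f' =O[l] fun _ => (1 : ℝ)) :
    (fun x => f x * h x - f' x * h' x) =O[l] g := by
  have h₁ := hf.mul hh_bdd
  have h₂ := hf'_bdd.mul hh
  simp only [mul_one, one_mul] at h₁ h₂
  exact (h₁.add h₂).congr_left fun x => by ring

theorem Asymptotics.IsBigO.isBigO_one_of_sub {f p g : α → ℝ}
    (h : (fun x => f x - p x) =O[l] g) (hg : g =O[l] fun _ => (1 : ℝ))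
    (hp : p =O[l] fun _ => (1 : ℝ)) : f =O[l] fun _ => (1 : ℝ) :=
  ((h.trans hg).add hp).congr_left fun _ => sub_add_cancel _ _

end

theorem isBigO_sub_rpow_add_one_of_hasDerivAt {F f : ℝ → ℝ} {k : ℝ} (hk : 0 ≤ k)
    (hFc : ContinuousOn F (Ici 0)) (hF : ∀ x > 0, HasDerivAt F (f x) x)
    (hf : f =O[𝓝[>] 0] fun x => x ^ k) :
    (fun x => F x - F 0) =O[𝓝[>] 0] fun x => x ^ (k + 1) := by
  obtain ⟨C, hC0, hC⟩ := hf.exists_pos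
  obtain ⟨δ, hδ, hbound⟩ := (nhdsGT_basis 0).eventually_iff.1 hC.bound
  refine IsBigO.of_bound C ?_
  filter_upwards [Ioo_mem_nhdsGT hδ] with x hx
  obtain ⟨c, hc, hslope⟩ := exists_hasDerivAt_eq_slope F f hx.1
    (hFc.mono Icc_subset_Ici_self) fun t ht => hF t ht.1
  have hfc : ‖f c‖ ≤ C * x ^ k :=
    calc ‖f c‖ ≤ C * ‖c ^ k‖ := hbound ⟨hc.1, hc.2.trans hx.2⟩
      _ ≤ C * x ^ k := by
        rw [norm_of_nonneg (rpow_nonneg hc.1.le k)]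
        exact mul_le_mul_of_nonneg_left (rpow_le_rpow hc.1.le hc.2.le hk) hC0.le
  rw [sub_zero, eq_div_iff hx.1.ne'] at hslope
  rw [← hslope, norm_mul, norm_of_nonneg (rpow_nonneg hx.1.le _), rpow_add_one hx.1.ne',
    norm_of_nonneg hx.1.le, ← mul_assoc]
  exact mul_le_mul_of_nonneg_right hfc hx.1.le

theorem isBigO_sub_pow_succ_of_hasDerivAt {F f : ℝ → ℝ} {k : ℕ}
    (hFc : ContinuousOn F (Ici 0)) (hF : ∀ x > 0, HasDerivAt F (f x) x)
    (hf : f =O[𝓝[>] 0] fun x => x ^ k) :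
    (fun x => F x - F 0) =O[𝓝[>] 0] fun x => x ^ (k + 1) := by
  have := isBigO_sub_rpow_add_one_of_hasDerivAt k.cast_nonneg hFc hF (by simpa using hf)
  exact_mod_cast this

theorem eventually_pos_of_isBigO_sub {f : ℝ → ℝ} {c : ℝ} (hc : 0 < c) {k m : ℕ} (hkm : k < m)
    (hf : (fun x => f x - x ^ k * c) =O[𝓝[>] 0] fun x => x ^ m) : ∀ᶠ x in 𝓝[>] 0, 0 < f x := by
  have ho := hf.trans_isLittleO ((isLittleO_pow_pow hkm).mono nhdsWithin_le_nhds)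
  filter_upwards [ho.def (half_pos hc), self_mem_nhdsWithin] with x hx (hx0 : 0 < x)
  have hxk := pow_pos hx0 k
  rw [norm_of_nonneg hxk.le, Real.norm_eq_abs, abs_le] at hx
  nlinarith

theorem isBigO_sinh_self : sinh =O[𝓝[>] 0] fun x => x ^ 1 := by
  simpa using ((hasDerivAt_sinh 0).isBigO_sub).mono nhdsWithin_le_nhds

theorem isBigO_cosh_sub_one : (fun x => cosh x - 1) =O[𝓝[>] 0] fun x => x ^ 2 := by
  simpa using isBigO_sub_pow_succ_of_hasDerivAt continuous_cosh.continuousOn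
    (fun x _ => hasDerivAt_cosh x) isBigO_sinh_self

theorem isBigO_sinh_sub_self : (fun x => sinh x - x) =O[𝓝[>] 0] fun x => x ^ 3 := by
  simpa using isBigO_sub_pow_succ_of_hasDerivAt (by fun_prop)
    (fun x _ => (hasDerivAt_sinh x).sub (hasDerivAt_id x)) isBigO_cosh_sub_one

theorem isBigO_cosh_sub_taylor :
    (fun x => cosh x - (1 + x ^ 2 / 2)) =O[𝓝[>] 0] fun x => x ^ 4 := by
  have := isBigO_sub_pow_succ_of_hasDerivAt (F := fun x => cosh x - (1 + x ^ 2 / 2))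
    (by fun_prop)
    (fun x _ => (hasDerivAt_cosh x).sub (((hasDerivAt_pow 2 x).div_const 2).const_add 1))
    (by simpa using isBigO_sinh_sub_self)
  simpa using this

theorem isBigO_sinh_sub_taylor :
    (fun x => sinh x - (x + x ^ 3 / 6)) =O[𝓝[>] 0] fun x => x ^ 5 := by
  have := isBigO_sub_pow_succ_of_hasDerivAt (F := fun x => sinh x - (x + x ^ 3 / 6)) (k := 4)
    (by fun_prop) (fun x _ => (hasDerivAt_sinh x).sub
      ((hasDerivAt_id x).add ((hasDerivAt_pow 3 x).div_const 6)))
    (isBigO_cosh_sub_taylor.congr_left fun x => by push_cast; ring)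
  simpa using this

theorem isBigO_sinh_sq_sub : (fun x => sinh x ^ 2 - x ^ 2) =O[𝓝[>] 0] fun x => x ^ 4 := by
  have hsum : (fun x => sinh x + x) =O[𝓝[>] 0] fun x => x ^ 1 :=
    isBigO_sinh_self.add ((isBigO_refl (fun x : ℝ => x ^ 1) _).congr_left fun x => pow_one x)
  exact (isBigO_sinh_sub_self.mul hsum).congr (fun x => by ring) fun x => by ring

theorem isBigO_one_add_rpow_sub (a : ℝ) :
    (fun u => (1 + u) ^ a - 1 - a * u) =O[𝓝[>] 0] fun u => u ^ 2 := by
  have hF (u : ℝ) (hu : u > 0) :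
      HasDerivAt (fun u => (1 + u) ^ a - 1 - a * u) (a * (1 + u) ^ (a - 1) - a) u := by
    simpa using ((((hasDerivAt_id u).const_add 1).rpow_const (p := a)
      (Or.inl (by positivity))).sub_const 1).fun_sub ((hasDerivAt_id u).const_mul a)
  have hf : (fun u => a * (1 + u) ^ (a - 1) - a) =O[𝓝[>] 0] fun u => u ^ 1 := by
    have : DifferentiableAt ℝ (fun u : ℝ => a * (1 + u) ^ (a - 1)) 0 := by
      fun_prop (disch := norm_num)
    simpa using this.isBigO_sub.mono nhdsWithin_le_nhds
  have hFc : ContinuousOn (fun u : ℝ => (1 + u) ^ a - 1 - a * u) (Ici 0) := fun u hu =>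
    ContinuousAt.continuousWithinAt <| by
      fun_prop (disch := exact Or.inl (by rw [mem_Ici] at hu; positivity))
  simpa using isBigO_sub_pow_succ_of_hasDerivAt hFc hF hf

theorem isBigO_sinh_div_self_sub :
    (fun x => sinh x / x - 1 - x ^ 2 / 6) =O[𝓝[>] 0] fun x => x ^ 4 := by
  refine (isBigO_sinh_sub_taylor.mul (isBigO_refl (fun x : ℝ => x⁻¹) _)).congr' ?_ ?_
  all_goals filter_upwards [self_mem_nhdsWithin] with x (hx : 0 < x)
  · field_simp
    ring
  · field_simp

theorem isBigO_sinh_div_self_sub_one :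
    (fun x => sinh x / x - 1) =O[𝓝[>] 0] fun x => x ^ 2 :=
  (isBigO_sinh_div_self_sub.trans ((isLittleO_pow_pow (by norm_num : 2 < 4)).isBigO.mono
    nhdsWithin_le_nhds)).add ((isBigO_refl (fun x : ℝ => x ^ 2) _).const_mul_left (1 / 6))
    |>.congr_left fun x => by ring

theorem tendsto_sinh_div_self_sub_one :
    Tendsto (fun x => sinh x / x - 1) (𝓝[>] 0) (𝓝[>] 0) := by
  refine tendsto_nhdsWithin_iff.2 ⟨isBigO_sinh_div_self_sub_one.trans_tendsto ?_, ?_⟩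
  · exact ((continuous_pow 2).tendsto' 0 0 (by simp)).mono_left nhdsWithin_le_nhds
  · filter_upwards [self_mem_nhdsWithin] with x (hx : 0 < x)
    exact sub_pos.2 ((one_lt_div hx).2 (self_lt_sinh_iff.2 hx))

theorem isBigO_sinh_div_self_rpow_sub (a : ℝ) :
    (fun x => (sinh x / x) ^ a - (1 + a / 6 * x ^ 2)) =O[𝓝[>] 0] fun x => x ^ 4 := by
  have hbin := (isBigO_one_add_rpow_sub a).comp_tendsto tendsto_sinh_div_self_sub_one
  have hsq : (fun x => (sinh x / x - 1) ^ 2) =O[𝓝[>] 0] fun x => x ^ 4 :=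
    (isBigO_sinh_div_self_sub_one.pow 2).congr_right fun x => by ring
  refine ((hbin.trans hsq).add (isBigO_sinh_div_self_sub.const_mul_left a)).congr_left fun x => ?_
  simp only [Function.comp, add_sub_cancel]
  ring

theorem isBigO_sinh_rpow_sub (a : ℝ) :
    (fun x => sinh x ^ a - (x ^ a + a / 6 * x ^ (a + 2))) =O[𝓝[>] 0] fun x => x ^ (a + 4) := by
  refine ((isBigO_refl (fun x : ℝ => x ^ a) _).mul (isBigO_sinh_div_self_rpow_sub a)).congr' ?_ ?_
  all_goals filter_upwards [self_mem_nhdsWithin] with x (hx : 0 < x)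
  · rw [div_rpow (sinh_pos_iff.2 hx).le hx.le, rpow_add hx, rpow_ofNat]
    field_simp
  · rw [rpow_add hx, rpow_ofNat]

noncomputable def sinhPowIntegral (n x : ℝ) : ℝ := ∫ s in (0 : ℝ)..x, sinh s ^ (n - 1)

theorem isBigO_sinhPowIntegral_sub {n : ℝ} (hn : 1 ≤ n) :
    (fun x => sinhPowIntegral n x - (x ^ n / n + (n - 1) / (6 * (n + 2)) * x ^ (n + 2)))
      =O[𝓝[>] 0] fun x => x ^ (n + 4) := by
  have hcont : Continuous fun s => sinh s ^ (n - 1) :=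
    (continuous_rpow_const (by linarith)).comp continuous_sinh
  have hF (x : ℝ) (hx : x > 0) : HasDerivAt
      (fun x => sinhPowIntegral n x - (x ^ n / n + (n - 1) / (6 * (n + 2)) * x ^ (n + 2)))
      (sinh x ^ (n - 1) - (x ^ (n - 1) + (n - 1) / 6 * x ^ (n - 1 + 2))) x := by
    refine (((hcont.integral_hasStrictDerivAt 0 x).hasDerivAt).sub
      (((hasDerivAt_rpow_const (p := n) (Or.inl hx.ne')).div_const n).add
        ((hasDerivAt_rpow_const (p := n + 2) (Or.inl hx.ne')).const_mul
          ((n - 1) / (6 * (n + 2)))))).congr_deriv ?_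
    rw [show n + 2 - 1 = n - 1 + 2 by ring]
    field_simp
  have hFc : ContinuousOn
      (fun x => sinhPowIntegral n x - (x ^ n / n + (n - 1) / (6 * (n + 2)) * x ^ (n + 2)))
      (Ici 0) :=
    ((intervalIntegral.continuous_primitive (fun a b => hcont.intervalIntegrable a b) 0).sub
      (((continuous_rpow_const (by linarith)).div_const n).add
        ((continuous_rpow_const (by linarith)).const_mul _))).continuousOn
  have hF0 :
      sinhPowIntegral n 0 - ((0 : ℝ) ^ n / n + (n - 1) / (6 * (n + 2)) * 0 ^ (n + 2)) = 0 := by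
    simp [sinhPowIntegral, zero_rpow (by linarith : n ≠ 0), zero_rpow (by linarith : n + 2 ≠ 0)]
  have := isBigO_sub_rpow_add_one_of_hasDerivAt (k := n + 3) (by linarith) hFc hF
    ((isBigO_sinh_rpow_sub (n - 1)).congr_right fun x => by ring_nf)
  exact (this.congr_left fun x => by rw [hF0, sub_zero]).congr_right fun x => by ring_nf

theorem isBigO_sinhPowIntegral_div_sub {n : ℝ} (hn : 1 ≤ n) :
    (fun x => sinhPowIntegral n x / x ^ n - (1 / n + (n - 1) / (6 * (n + 2)) * x ^ 2))
      =O[𝓝[>] 0] fun x => x ^ 4 := by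
  refine ((isBigO_sinhPowIntegral_sub hn).mul
    (isBigO_refl (fun x : ℝ => (x ^ n)⁻¹) _)).congr' ?_ ?_
  all_goals
    filter_upwards [self_mem_nhdsWithin] with x (hx : 0 < x)
    have := (rpow_pos_of_pos hx n).ne'
    rw [rpow_add hx, rpow_ofNat]
    field_simp

-- `g` with `cosh x, G x, sinh x ^ n, sinh x ^ 2` abstracted to `C, Γ, S, Q`.
noncomputable def gCombination (n σ C Γ S Q : ℝ) : ℝ :=
  (n - 2) * C * (Γ * C - S / n) - σ * Γ * Q

theorem gCombination_mul (n σ C Γ S Q t : ℝ) :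
    gCombination n σ C (t * Γ) (t * S) Q = t * gCombination n σ C Γ S Q := by
  unfold gCombination
  ring

theorem isBigO_gCombination_sub {l : Filter ℝ} (hl : l ≤ 𝓝 0) {n : ℝ} (hn : 0 < n) (σ : ℝ)
    {C Γ S Q : ℝ → ℝ}
    (hC : (fun x => C x - (1 + x ^ 2 / 2)) =O[l] fun x => x ^ 4)
    (hΓ : (fun x => Γ x - (1 / n + (n - 1) / (6 * (n + 2)) * x ^ 2)) =O[l] fun x => x ^ 4)
    (hS : (fun x => S x - (1 + n / 6 * x ^ 2)) =O[l] fun x => x ^ 4)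
    (hQ : (fun x => Q x - x ^ 2) =O[l] fun x => x ^ 4) :
    (fun x => gCombination n σ (C x) (Γ x) (S x) (Q x)
      - x ^ 2 * ((n - 2) / (n * (n + 2)) - σ / n)) =O[l] fun x => x ^ 4 := by
  have bdd (r : ℝ → ℝ) (hr : Continuous r) : r =O[l] fun _ => (1 : ℝ) :=
    ((hr.tendsto 0).mono_left hl).isBigO_one ℝ
  have quartic (K : ℝ) : (fun x : ℝ => K * x ^ 4) =O[l] fun x => x ^ 4 :=
    (isBigO_refl _ _).const_mul_left K
  have hCb := hC.isBigO_one_of_sub (bdd _ (by fun_prop)) (bdd _ (by fun_prop))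
  have hQb := hQ.isBigO_one_of_sub (bdd _ (by fun_prop)) (bdd _ (by fun_prop))
  -- The truncated expansions differ from the targets by the multiples of `x⁴` given below.
  have hm : (fun x => Γ x * C x - S x / n - x ^ 2 / (n * (n + 2))) =O[l] fun x => x ^ 4 :=
    (((hΓ.mul_sub_mul hC hCb (bdd _ (by fun_prop))).sub (hS.const_mul_left (1 / n))).add
      (quartic ((n - 1) / (12 * (n + 2))))).congr_left fun x => by field_simp; ring
  exact ((((hm.mul_sub_mul hC hCb (bdd _ (by fun_prop))).const_mul_left (n - 2)).sub
    ((hΓ.mul_sub_mul hQ hQb (bdd _ (by fun_prop))).const_mul_left σ)).add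
      (quartic ((n - 2) / (2 * n * (n + 2)) - σ * ((n - 1) / (6 * (n + 2)))))).congr_left
        fun x => by unfold gCombination; field_simp; ring

theorem g_asymptotics_general (n : ℝ) (hn : 2 < n) (p : ℝ) (hp : p = (n + 2) / (n - 2))
    (σ : ℝ) :
    ((fun x : ℝ =>
        ((n - 2) * Real.cosh x *
            ((∫ s in (0:ℝ)..x, Real.sinh s ^ (n - 1)) * Real.cosh x - Real.sinh x ^ n / n)
          - σ * (∫ s in (0:ℝ)..x, Real.sinh s ^ (n - 1)) * Real.sinh x ^ 2)
        - x ^ (n + 2) * (1 / (n * p) - σ / n))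
      =O[nhdsWithin 0 (Set.Ioi 0)] fun x : ℝ => x ^ (n + 4))
    ∧ (σ < 1 / p → ∃ δ > 0, ∀ x ∈ Set.Ioo (0:ℝ) δ,
        0 < (n - 2) * Real.cosh x *
            ((∫ s in (0:ℝ)..x, Real.sinh s ^ (n - 1)) * Real.cosh x - Real.sinh x ^ n / n)
          - σ * (∫ s in (0:ℝ)..x, Real.sinh s ^ (n - 1)) * Real.sinh x ^ 2) := by
  set ĝ := fun x => gCombination n σ (cosh x) (sinhPowIntegral n x / x ^ n) ((sinh x / x) ^ n)
    (sinh x ^ 2)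
  have hexp := isBigO_gCombination_sub nhdsWithin_le_nhds (by linarith) σ isBigO_cosh_sub_taylor
    (isBigO_sinhPowIntegral_div_sub (by linarith)) (isBigO_sinh_div_self_rpow_sub n)
    isBigO_sinh_sq_sub
  have hfactor (x : ℝ) (hx : 0 < x) : gCombination n σ (cosh x) (sinhPowIntegral n x)
      (sinh x ^ n) (sinh x ^ 2) = x ^ n * ĝ x := by
    have hxn := (rpow_pos_of_pos hx n).ne'
    rw [← gCombination_mul, div_rpow (sinh_pos_iff.2 hx).le hx.le, mul_div_cancel₀ _ hxn,
      mul_div_cancel₀ _ hxn]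
  refine ⟨?_, fun hσp => ?_⟩
  · have hc : 1 / (n * p) = (n - 2) / (n * (n + 2)) := by
      rw [hp]
      field_simp
    refine ((isBigO_refl (fun x : ℝ => x ^ n) _).mul hexp).congr' ?_ ?_ <;>
      filter_upwards [self_mem_nhdsWithin] with x (hx : 0 < x)
    · rw [mul_sub, ← hfactor x hx, hc, rpow_add hx, rpow_ofNat]
      unfold gCombination sinhPowIntegral
      ring
    · rw [rpow_add hx, rpow_ofNat]
  · have hcoeff : 0 < (n - 2) / (n * (n + 2)) - σ / n := by
      rw [hp, one_div_div, lt_div_iff₀ (by linarith)] at hσp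
      rw [sub_pos, div_lt_div_iff₀ (by linarith) (by nlinarith)]
      nlinarith
    obtain ⟨δ, hδ, hpos⟩ := (nhdsGT_basis 0).eventually_iff.1
      (eventually_pos_of_isBigO_sub hcoeff (by norm_num : 2 < 4) hexp)
    refine ⟨δ, hδ, fun x hx => ?_⟩
    show 0 < gCombination n σ (cosh x) (sinhPowIntegral n x) (sinh x ^ n) (sinh x ^ 2)
    rw [hfactor x hx.1]
    exact mul_pos (rpow_pos_of_pos hx.1 n) (hpos hx)

theorem g_asymptotics (n : ℝ) (hn : 2 < n) (p : ℝ) (hp : p = (n + 2) / (n - 2))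
    (σ : ℝ) (hσ : 0 < σ) :
    ((fun x : ℝ =>
        ((n - 2) * Real.cosh x *
            ((∫ s in (0:ℝ)..x, Real.sinh s ^ (n - 1)) * Real.cosh x - Real.sinh x ^ n / n)
          - σ * (∫ s in (0:ℝ)..x, Real.sinh s ^ (n - 1)) * Real.sinh x ^ 2)
        - x ^ (n + 2) * (1 / (n * p) - σ / n))
      =O[nhdsWithin 0 (Set.Ioi 0)] fun x : ℝ => x ^ (n + 4))
    ∧ (σ < 1 / p → ∃ δ > 0, ∀ x ∈ Set.Ioo (0:ℝ) δ,
        0 < (n - 2) * Real.cosh x *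
            ((∫ s in (0:ℝ)..x, Real.sinh s ^ (n - 1)) * Real.cosh x - Real.sinh x ^ n / n)
          - σ * (∫ s in (0:ℝ)..x, Real.sinh s ^ (n - 1)) * Real.sinh x ^ 2) :=
  g_asymptotics_general n hn p hp σ
end
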